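/- Order identification for violation classes (Lemma 4, violation part): Let φ be an STL formula with a classification criterion fixed as in the context. If (ψ, σ) ∈ ⪯⁻(φ), then the falsifiable sets satisfy V(ψ) ⊆ V(σ), i.e. every signal w for which there exists θ ∈ Θ with w ⊭ ψ(θ) also admits some θ' ∈ Θ with w ⊭ σ(θ'). -/

import Mathlib

namespace STLClass

abbrev Signal (N : ℕ) := ℝ → Fin N → ℝ

def shift {N : ℕ} (w : Signal N) (t : ℝ) : Signal N := fun t' => w (t + t')

inductive STL (N : ℕ) : Type where
  | atom (f : (Fin N → ℝ) → ℝ)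
  | falsum
  | not (φ : STL N)
  | and (φ₁ φ₂ : STL N)
  | or (φ₁ φ₂ : STL N)
  | always (a b : ℝ) (φ : STL N)
  | event (a b : ℝ) (φ : STL N)
  | untl (a b : ℝ) (φ₁ φ₂ : STL N)

def STL.top {N : ℕ} : STL N := .not .falsum

noncomputable def robust {N : ℕ} : STL N → Signal N → EReal
  | .atom f, w => ((f (w 0) : ℝ) : EReal)
  | .falsum, _ => ⊥
  | .not φ, w => - robust φ w
  | .and φ₁ φ₂, w => min (robust φ₁ w) (robust φ₂ w)
  | .or φ₁ φ₂, w => max (robust φ₁ w) (robust φ₂ w)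
  | .always a b φ, w => ⨅ t : Set.Icc a b, robust φ (shift w t.1)
  | .event a b φ, w => ⨆ t : Set.Icc a b, robust φ (shift w t.1)
  | .untl a b φ₁ φ₂, w =>
      ⨆ t : Set.Icc a b,
        min (robust φ₂ (shift w t.1)) (⨅ t' : Set.Ico (0 : ℝ) t.1, robust φ₁ (shift w t'.1))

def Sat {N : ℕ} (w : Signal N) (φ : STL N) : Prop := 0 < robust φ w

def Vio {N : ℕ} (w : Signal N) (φ : STL N) : Prop := robust φ w < 0

/-- An STL formula together with a classification criterion: each temporal operator is
annotated with a natural number `k`, meaning that its interval is split into `k + 1`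
consecutive segments (so the "positive integer" of the criterion is `k + 1`). -/
inductive AForm (N : ℕ) : Type where
  | atom (f : (Fin N → ℝ) → ℝ)
  | falsum
  | not (φ : AForm N)
  | and (φ₁ φ₂ : AForm N)
  | or (φ₁ φ₂ : AForm N)
  | always (a b : ℝ) (k : ℕ) (φ : AForm N)
  | event (a b : ℝ) (k : ℕ) (φ : AForm N)
  | untl (a b : ℝ) (k : ℕ) (φ₁ φ₂ : AForm N)

/-- The underlying STL formula of an annotated formula. -/
def AForm.toSTL {N : ℕ} : AForm N → STL N
  | .atom f => .atom f
  | .falsum => .falsum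
  | .not φ => .not φ.toSTL
  | .and φ₁ φ₂ => .and φ₁.toSTL φ₂.toSTL
  | .or φ₁ φ₂ => .or φ₁.toSTL φ₂.toSTL
  | .always a b _ φ => .always a b φ.toSTL
  | .event a b _ φ => .event a b φ.toSTL
  | .untl a b _ φ₁ φ₂ => .untl a b φ₁.toSTL φ₂.toSTL

/-- Well-formedness: every temporal interval `[a, b]` satisfies `0 ≤ a < b`. -/
def AForm.WF {N : ℕ} : AForm N → Prop
  | .atom _ => True
  | .falsum => True
  | .not φ => φ.WF
  | .and φ₁ φ₂ => φ₁.WF ∧ φ₂.WF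
  | .or φ₁ φ₂ => φ₁.WF ∧ φ₂.WF
  | .always a b _ φ => 0 ≤ a ∧ a < b ∧ φ.WF
  | .event a b _ φ => 0 ≤ a ∧ a < b ∧ φ.WF
  | .untl a b _ φ₁ φ₂ => 0 ≤ a ∧ a < b ∧ φ₁.WF ∧ φ₂.WF

/-- A split of the interval `[a, b]` into `n` consecutive nonsingular segments:
`n + 1` strictly increasing points starting at `a` and ending at `b`.  The segment
`i` is `[pts i.castSucc, pts i.succ]`. -/
structure Split (a b : ℝ) (n : ℕ) : Type where
  pts : Fin (n + 1) → ℝ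
  strictMono : StrictMono pts
  first : pts 0 = a
  last : pts (Fin.last n) = b

/-- The valuation space `Θ` of an annotated formula: a choice of admissible breakpoints
for each temporal subformula. -/
def Val {N : ℕ} : AForm N → Type
  | .atom _ => PUnit
  | .falsum => PUnit
  | .not φ => Val φ
  | .and φ₁ φ₂ => Val φ₁ × Val φ₂
  | .or φ₁ φ₂ => Val φ₁ × Val φ₂
  | .always a b k φ => Split a b (k + 1) × Val φ
  | .event a b k φ => Split a b (k + 1) × Val φ
  | .untl a b k φ₁ φ₂ => Split a b (k + 1) × Val φ₁ × Val φ₂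

/-- Finite conjunction of a list of STL formulas (empty conjunction is `⊤`). -/
def listAnd {N : ℕ} : List (STL N) → STL N
  | [] => STL.top
  | [φ] => φ
  | φ :: φ' :: rest => .and φ (listAnd (φ' :: rest))

/-- Finite disjunction of a list of STL formulas (empty disjunction is `⊥`). -/
def listOr {N : ℕ} : List (STL N) → STL N
  | [] => .falsum
  | [φ] => φ
  | φ :: φ' :: rest => .or φ (listOr (φ' :: rest))

/-- `⋀_{i} f i`. -/
def iAnd {N : ℕ} {k : ℕ} (f : Fin k → STL N) : STL N := listAnd (List.ofFn f)

/-- `⋁_{i} f i`. -/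
def iOr {N : ℕ} {k : ℕ} (f : Fin k → STL N) : STL N := listOr (List.ofFn f)

/-- `Cls true φ` is the set `Cls⁺(φ)` of satisfaction classes and `Cls false φ` is the
set `Cls⁻(φ)` of violation classes; a class is represented by its instantiation map
`Θ → STL N` sending a valuation `θ` to the STL formula `ψ(θ)`. -/
def Cls {N : ℕ} : Bool → (φ : AForm N) → Set (Val φ → STL N)
  | b, .atom f =>
      {fun _ => if b then STL.falsum else STL.top, fun _ => STL.atom f}
  | _, .falsum => {fun _ => STL.falsum}
  | b, .not φ =>
      {c | ∃ ψ ∈ Cls (!b) φ, c = fun θ => STL.not (ψ θ)}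
  | b, .and φ₁ φ₂ =>
      {c | ∃ ψ₁ ∈ Cls b φ₁, ∃ ψ₂ ∈ Cls b φ₂,
        c = fun θ => STL.and (ψ₁ θ.1) (ψ₂ θ.2)}
  | b, .or φ₁ φ₂ =>
      {c | ∃ ψ₁ ∈ Cls b φ₁, ∃ ψ₂ ∈ Cls b φ₂,
        c = fun θ => STL.or (ψ₁ θ.1) (ψ₂ θ.2)}
  | b, .always _ _ k φ =>
      {c | ∃ ψ : Fin (k + 1) → Val φ → STL N, (∀ i, ψ i ∈ Cls b φ) ∧
        c = fun θ => iAnd fun i : Fin (k + 1) =>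
          STL.always (θ.1.pts i.castSucc) (θ.1.pts i.succ) (ψ i θ.2)}
  | b, .event _ _ k φ =>
      {c | ∃ ψ : Fin (k + 1) → Val φ → STL N, (∀ i, ψ i ∈ Cls b φ) ∧
        c = fun θ => iOr fun i : Fin (k + 1) =>
          STL.event (θ.1.pts i.castSucc) (θ.1.pts i.succ) (ψ i θ.2)}
  | b, .untl _ _ k φ₁ φ₂ =>
      {c | ∃ ψ : Fin (k + 1) → Val φ₁ → STL N, ∃ σ : Fin (k + 1) → Val φ₂ → STL N,
           ∃ ξ : Fin (k + 1) → Fin (k + 1) → Val φ₁ → STL N,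
        (∀ i, ψ i ∈ Cls b φ₁) ∧ (∀ i, σ i ∈ Cls b φ₂) ∧ (∀ i j, ξ i j ∈ Cls b φ₁) ∧
        c = fun θ => iOr fun i : Fin (k + 1) =>
          STL.and
            (STL.untl (θ.1.pts i.castSucc) (θ.1.pts i.succ) (ψ i θ.2.1) (σ i θ.2.2))
            (iAnd fun j : Fin (i : ℕ) =>
              STL.always (θ.1.pts (j.castLE i.isLt.le).castSucc)
                (θ.1.pts (j.castLE i.isLt.le).succ) (ξ i (j.castLE i.isLt.le) θ.2.1))}

/-- The satisfiable set `S(ψ)` of a class. -/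
def SatSet {N : ℕ} (φ : AForm N) (ψ : Val φ → STL N) : Set (Signal N) :=
  {w | ∃ θ : Val φ, Sat w (ψ θ)}

/-- The falsifiable set `V(ψ)` of a class. -/
def VioSet {N : ℕ} (φ : AForm N) (ψ : Val φ → STL N) : Set (Signal N) :=
  {w | ∃ θ : Val φ, Vio w (ψ θ)}


/-- `Pre true φ` is the relation `⪯⁺(φ)` and `Pre false φ` is the relation `⪯⁻(φ)`,
given as sets of pairs of classes. -/
def Pre {N : ℕ} : Bool → (φ : AForm N) → Set ((Val φ → STL N) × (Val φ → STL N))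
  | b, .atom f =>
      { (fun _ => if b then STL.falsum else STL.top, fun _ => STL.atom f),
        (fun _ => STL.atom f, fun _ => STL.atom f),
        (fun _ => if b then STL.falsum else STL.top,
         fun _ => if b then STL.falsum else STL.top) }
  | _, .falsum => {(fun _ => STL.falsum, fun _ => STL.falsum)}
  | b, .not φ =>
      {p | ∃ q ∈ Pre (!b) φ,
        p = (fun θ => STL.not (q.1 θ), fun θ => STL.not (q.2 θ))}
  | b, .and φ₁ φ₂ =>
      {p | ∃ q₁ ∈ Pre b φ₁, ∃ q₂ ∈ Pre b φ₂,
        p = (fun θ => STL.and (q₁.1 θ.1) (q₂.1 θ.2),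
             fun θ => STL.and (q₁.2 θ.1) (q₂.2 θ.2))}
  | b, .or φ₁ φ₂ =>
      {p | ∃ q₁ ∈ Pre b φ₁, ∃ q₂ ∈ Pre b φ₂,
        p = (fun θ => STL.or (q₁.1 θ.1) (q₂.1 θ.2),
             fun θ => STL.or (q₁.2 θ.1) (q₂.2 θ.2))}
  | b, .always _ _ k φ =>
      {p | ∃ ψ σ : Fin (k + 1) → Val φ → STL N, (∀ i, (ψ i, σ i) ∈ Pre b φ) ∧
        p = (fun θ => iAnd fun i : Fin (k + 1) =>
               STL.always (θ.1.pts i.castSucc) (θ.1.pts i.succ) (ψ i θ.2),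
             fun θ => iAnd fun i : Fin (k + 1) =>
               STL.always (θ.1.pts i.castSucc) (θ.1.pts i.succ) (σ i θ.2))}
  | b, .event _ _ k φ =>
      {p | ∃ ψ σ : Fin (k + 1) → Val φ → STL N, (∀ i, (ψ i, σ i) ∈ Pre b φ) ∧
        p = (fun θ => iOr fun i : Fin (k + 1) =>
               STL.event (θ.1.pts i.castSucc) (θ.1.pts i.succ) (ψ i θ.2),
             fun θ => iOr fun i : Fin (k + 1) =>
               STL.event (θ.1.pts i.castSucc) (θ.1.pts i.succ) (σ i θ.2))}
  | b, .untl _ _ k φ₁ φ₂ =>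
      {p | ∃ ψ ψ' : Fin (k + 1) → Val φ₁ → STL N,
           ∃ σ σ' : Fin (k + 1) → Val φ₂ → STL N,
           ∃ ξ ξ' : Fin (k + 1) → Fin (k + 1) → Val φ₁ → STL N,
        (∀ i, (ψ i, ψ' i) ∈ Pre b φ₁) ∧ (∀ i, (σ i, σ' i) ∈ Pre b φ₂) ∧
        (∀ i j, (ξ i j, ξ' i j) ∈ Pre b φ₁) ∧
        p = (fun θ => iOr fun i : Fin (k + 1) =>
               STL.and
                 (STL.untl (θ.1.pts i.castSucc) (θ.1.pts i.succ) (ψ i θ.2.1) (σ i θ.2.2))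
                 (iAnd fun j : Fin (i : ℕ) =>
                   STL.always (θ.1.pts (j.castLE i.isLt.le).castSucc)
                     (θ.1.pts (j.castLE i.isLt.le).succ) (ξ i (j.castLE i.isLt.le) θ.2.1)),
             fun θ => iOr fun i : Fin (k + 1) =>
               STL.and
                 (STL.untl (θ.1.pts i.castSucc) (θ.1.pts i.succ) (ψ' i θ.2.1) (σ' i θ.2.2))
                 (iAnd fun j : Fin (i : ℕ) =>
                   STL.always (θ.1.pts (j.castLE i.isLt.le).castSucc)
                     (θ.1.pts (j.castLE i.isLt.le).succ) (ξ' i (j.castLE i.isLt.le) θ.2.1)))}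

/-!
Both sides of a pair in `⪯^±(φ)` are built from the same connectives over the same
intervals, and robustness is monotone in every argument of `min`, `max`, `⨅`, `⨆` and
antitone under negation. By induction on `φ`, `⪯⁺` therefore raises and `⪯⁻` lowers the
robustness at every signal for every common valuation `θ`, so a valuation violating `ψ`
also violates `σ`.
-/

def OrientedLE {α : Type*} [LE α] (b : Bool) (x y : α) : Prop := if b then x ≤ y else y ≤ x

namespace OrientedLE

variable {α : Type*} {b : Bool}

theorem refl [Preorder α] (x : α) : OrientedLE b x x := by
  cases b <;> simp [OrientedLE]

theorem min [LinearOrder α] {x y x' y' : α} (h : OrientedLE b x y) (h' : OrientedLE b x' y') :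
    OrientedLE b (min x x') (min y y') := by
  cases b <;> simp only [OrientedLE, if_true, if_false, Bool.false_eq_true] at * <;>
    exact min_le_min h h'

theorem max [LinearOrder α] {x y x' y' : α} (h : OrientedLE b x y) (h' : OrientedLE b x' y') :
    OrientedLE b (max x x') (max y y') := by
  cases b <;> simp only [OrientedLE, if_true, if_false, Bool.false_eq_true] at * <;>
    exact max_le_max h h'

theorem iInf [CompleteLattice α] {ι : Sort*} {f g : ι → α} (h : ∀ i, OrientedLE b (f i) (g i)) :
    OrientedLE b (⨅ i, f i) (⨅ i, g i) := by
  cases b <;> simp only [OrientedLE, if_true, if_false, Bool.false_eq_true] at * <;>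
    exact iInf_mono h

theorem iSup [CompleteLattice α] {ι : Sort*} {f g : ι → α} (h : ∀ i, OrientedLE b (f i) (g i)) :
    OrientedLE b (⨆ i, f i) (⨆ i, g i) := by
  cases b <;> simp only [OrientedLE, if_true, if_false, Bool.false_eq_true] at * <;>
    exact iSup_mono h

theorem neg {x y : EReal} (h : OrientedLE (!b) x y) : OrientedLE b (-x) (-y) := by
  cases b <;> simp only [OrientedLE, Bool.not_true, Bool.not_false, if_true, if_false,
    Bool.false_eq_true] at * <;> exact EReal.neg_le_neg_iff.mpr h

end OrientedLE

section FiniteConnectives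

variable {N : ℕ} (w : Signal N)

theorem robust_listAnd (l : List (STL N)) : robust (listAnd l) w = ⨅ φ ∈ l, robust φ w := by
  induction l using listAnd.induct with
  | case1 => simp [listAnd, STL.top, robust]
  | case2 φ => simp [listAnd]
  | case3 φ φ' rest ih =>
    simp only [listAnd, robust, ih, List.mem_cons, iInf_or, iInf_inf_eq, iInf_iInf_eq_left]

theorem robust_listOr (l : List (STL N)) : robust (listOr l) w = ⨆ φ ∈ l, robust φ w := by
  induction l using listOr.induct with
  | case1 => simp [listOr, robust]
  | case2 φ => simp [listOr]
  | case3 φ φ' rest ih =>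
    simp only [listOr, robust, ih, List.mem_cons, iSup_or, iSup_sup_eq, iSup_iSup_eq_left]

theorem robust_iAnd {k : ℕ} (f : Fin k → STL N) : robust (iAnd f) w = ⨅ i, robust (f i) w := by
  simp only [iAnd, robust_listAnd, List.mem_ofFn', iInf_range]

theorem robust_iOr {k : ℕ} (f : Fin k → STL N) : robust (iOr f) w = ⨆ i, robust (f i) w := by
  simp only [iOr, robust_listOr, List.mem_ofFn', iSup_range]

end FiniteConnectives

theorem orientedLE_robust_of_mem_Pre {N : ℕ} {b : Bool} {φ : AForm N} {ψ σ : Val φ → STL N}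
    (h : (ψ, σ) ∈ Pre b φ) (θ : Val φ) (w : Signal N) :
    OrientedLE b (robust (ψ θ) w) (robust (σ θ) w) := by
  induction φ generalizing b w with
  | atom f =>
    simp only [Pre, Set.mem_insert_iff, Set.mem_singleton_iff, Prod.mk.injEq] at h
    rcases h with ⟨rfl, rfl⟩ | ⟨rfl, rfl⟩ | ⟨rfl, rfl⟩ <;>
      cases b <;> simp [OrientedLE, robust, STL.top]
  | falsum =>
    obtain ⟨rfl, rfl⟩ := Prod.mk.inj h
    exact .refl _
  | not φ ih =>
    obtain ⟨q, hq, hp⟩ := h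
    obtain ⟨rfl, rfl⟩ := Prod.mk.inj hp
    exact .neg (ih hq θ w)
  | and φ₁ φ₂ ih₁ ih₂ =>
    obtain ⟨q₁, hq₁, q₂, hq₂, hp⟩ := h
    obtain ⟨rfl, rfl⟩ := Prod.mk.inj hp
    exact .min (ih₁ hq₁ θ.1 w) (ih₂ hq₂ θ.2 w)
  | or φ₁ φ₂ ih₁ ih₂ =>
    obtain ⟨q₁, hq₁, q₂, hq₂, hp⟩ := h
    obtain ⟨rfl, rfl⟩ := Prod.mk.inj hp
    exact .max (ih₁ hq₁ θ.1 w) (ih₂ hq₂ θ.2 w)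
  | always a a' k φ ih =>
    obtain ⟨ψ, σ, hψσ, hp⟩ := h
    obtain ⟨rfl, rfl⟩ := Prod.mk.inj hp
    simp only [robust_iAnd, robust]
    exact .iInf fun i => .iInf fun t => ih (hψσ i) θ.2 _
  | event a a' k φ ih =>
    obtain ⟨ψ, σ, hψσ, hp⟩ := h
    obtain ⟨rfl, rfl⟩ := Prod.mk.inj hp
    simp only [robust_iOr, robust]
    exact .iSup fun i => .iSup fun t => ih (hψσ i) θ.2 _
  | untl a a' k φ₁ φ₂ ih₁ ih₂ =>
    obtain ⟨ψ, ψ', σ, σ', ξ, ξ', hψ, hσ, hξ, hp⟩ := h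
    obtain ⟨rfl, rfl⟩ := Prod.mk.inj hp
    simp only [robust_iOr, robust_iAnd, robust]
    refine .iSup fun i => .min (.iSup fun t => .min (ih₂ (hσ i) θ.2.2 _) ?_) ?_
    · exact .iInf fun t' => ih₁ (hψ i) θ.2.1 _
    · exact .iInf fun j => .iInf fun t => ih₁ (hξ i _) θ.2.1 _

theorem pre_vio_inclusion_general {N : ℕ} (φ : AForm N)
    (ψ σ : Val φ → STL N) (h : (ψ, σ) ∈ Pre false φ) :
    VioSet φ ψ ⊆ VioSet φ σ := fun _ ⟨θ, hθ⟩ =>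
  ⟨θ, lt_of_le_of_lt (orientedLE_robust_of_mem_Pre h θ _) hθ⟩

/-- Order identification for violation classes (Lemma 4, violation part):
if `(ψ, σ) ∈ ⪯⁻(φ)` then `V(ψ) ⊆ V(σ)`. -/
theorem pre_vio_inclusion {N : ℕ} (φ : AForm N) (hφ : φ.WF)
    (ψ σ : Val φ → STL N) (h : (ψ, σ) ∈ Pre false φ) :
    VioSet φ ψ ⊆ VioSet φ σ :=
  pre_vio_inclusion_general φ ψ σ h

end STLClass
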